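/- arXiv:1708.01518 — 2 statements merged into one kernel-verified Lean document; each statement's English description precedes it below -/
import Mathlib

section
/- For the loop γ(t) in the configuration space of 6 points in ℂ given by z₁(t) = -1/(εe^{2πit}), z₂(t) = -εe^{2πit}, z₃(t) = 1, z₄(t) = -1, z₅(t) = (εe^{2πit}i - 1)/(εe^{2πit} - i), z₆(t) = -(εe^{2πit}i + 1)/(εe^{2πit} + i), with 0 < ε < 1 small, the integral over γ of the 1-form α = (1/2πi)·d(z₁-z₂)/(z₁-z₂) - (1/2πi)·d(z₃-z₄)/(z₃-z₄) equals -1. -/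
/-!
Put `w(t) = ε e^{2πit}`. Then `z₁ - z₂ = w - w⁻¹ = -ε⁻¹ (1 - w²) e^{-2πit}`, so the logarithmic
derivative of `z₁ - z₂` is that of `1 - w²` minus `2πi`, while `z₃ - z₄ = 2` contributes nothing.
As `|w| = ε < 1`, the loop `1 - w²` stays in the right half-plane, where `log` is a primitive of
its logarithmic derivative, and it closes up; so only `-2πi` survives.
The six points are distinct because every coincidence, and every vanishing denominator, forces
`w = 0` or `|w| = 1`.
-/

open Real

open Complex (I slitPlane)

@[fun_prop]
lemma contDiff_ofReal {n : WithTop ℕ∞} : ContDiff ℝ n (fun x : ℝ => (x : ℂ)) :=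
  Complex.ofRealCLM.contDiff

lemma continuous_logDeriv {𝕜 𝕜' : Type*} [NontriviallyNormedField 𝕜] [NontriviallyNormedField 𝕜']
    [NormedAlgebra 𝕜 𝕜'] {f : 𝕜 → 𝕜'} (hf : ContDiff 𝕜 1 f) (hf0 : ∀ x, f x ≠ 0) :
    Continuous (logDeriv f) :=
  hf.continuous_deriv_one.div hf.continuous hf0

lemma integral_logDeriv_eq_log_sub_log {f : ℝ → ℂ} (hf : ContDiff ℝ 1 f)
    (hslit : ∀ t, f t ∈ slitPlane) (a b : ℝ) :
    ∫ t in a..b, logDeriv f t = Complex.log (f b) - Complex.log (f a) :=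
  intervalIntegral.integral_eq_sub_of_hasDerivAt
    (fun t _ => ((hf.differentiable one_ne_zero t).hasDerivAt.clog_real (hslit t)))
    ((continuous_logDeriv hf fun t => Complex.slitPlane_ne_zero (hslit t)).intervalIntegrable a b)

lemma logDeriv_cexp_mul_ofReal (c : ℂ) (t : ℝ) :
    logDeriv (fun s : ℝ => Complex.exp (c * s)) t = c := by
  have h : HasDerivAt (fun s : ℝ => Complex.exp (c * s)) (Complex.exp (c * t) * c) t := by
    simpa using (((hasDerivAt_id (t : ℂ)).const_mul c).cexp).comp_ofReal
  rw [logDeriv_apply, h.deriv, mul_div_cancel_left₀ _ (Complex.exp_ne_zero _)]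

section Loop

variable {a c : ℂ}

lemma norm_mul_cexp_mul_ofReal (hc : c.re = 0) (t : ℝ) : ‖a * Complex.exp (c * t)‖ = ‖a‖ := by
  simp [Complex.norm_exp, hc]

lemma logDeriv_circle_sub_inv {t : ℝ} (ha : a ≠ 0) (ht : (a * Complex.exp (c * t)) ^ 2 ≠ 1) :
    logDeriv (fun s : ℝ => -(1 / (a * Complex.exp (c * s))) - -(a * Complex.exp (c * s))) t =
      logDeriv (fun s : ℝ => 1 - (a * Complex.exp (c * s)) ^ 2) t - c := by
  have hfactor : (fun s : ℝ => -(1 / (a * Complex.exp (c * s))) - -(a * Complex.exp (c * s))) =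
      fun s : ℝ => -a⁻¹ * (1 - (a * Complex.exp (c * s)) ^ 2) * Complex.exp (-c * s) := by
    funext s
    rw [neg_mul c, Complex.exp_neg]
    field_simp
    ring
  rw [hfactor, logDeriv_mul t, logDeriv_const_mul t, logDeriv_cexp_mul_ofReal, sub_eq_add_neg]
  all_goals first | fun_prop | simp [ha, sub_eq_zero, Ne.symm ht, Complex.exp_ne_zero]

lemma integral_logDeriv_circle_sub_inv (ha : a ≠ 0) (hc : c.re = 0) (hc1 : Complex.exp c = 1)
    (ha1 : ‖a‖ < 1) :
    ∫ t in (0:ℝ)..1,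
      logDeriv (fun s : ℝ => -(1 / (a * Complex.exp (c * s))) - -(a * Complex.exp (c * s))) t
      = -c := by
  have hslit : ∀ t : ℝ, 1 - (a * Complex.exp (c * t)) ^ 2 ∈ slitPlane := fun t => by
    rw [sub_eq_add_neg]
    refine Complex.mem_slitPlane_of_norm_lt_one ?_
    rw [norm_neg, norm_pow, norm_mul_cexp_mul_ofReal hc]
    exact pow_lt_one₀ (norm_nonneg a) ha1 two_ne_zero
  have hg : ContDiff ℝ 1 (fun s : ℝ => 1 - (a * Complex.exp (c * s)) ^ 2) := by
    fun_prop
  have hsq : ∀ t : ℝ, (a * Complex.exp (c * t)) ^ 2 ≠ 1 := fun t h => by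
    simpa [h] using hslit t
  simp_rw [logDeriv_circle_sub_inv ha (hsq _)]
  rw [intervalIntegral.integral_sub, integral_logDeriv_eq_log_sub_log hg hslit]
  · simp [hc1]
  · exact (continuous_logDeriv hg fun t => Complex.slitPlane_ne_zero (hslit t)).intervalIntegrable _ _
  · exact intervalIntegrable_const

end Loop

lemma pairwise_ne_of_norm_ne_one {w : ℂ} (hw0 : w ≠ 0) (hw1 : ‖w‖ ≠ 1) :
    [-(1 / w), -w, 1, -1, (w * I - 1) / (w - I), -((w * I + 1) / (w + I))].Pairwise (· ≠ ·) := by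
  have hsq : w ^ 2 - 1 ≠ 0 := fun h => by
    have h' : ‖w‖ ^ 2 = 1 := by simpa using congrArg norm (sub_eq_zero.1 h)
    exact hw1 ((pow_eq_one_iff_of_nonneg (norm_nonneg w) two_ne_zero).1 h')
  have hne : ∀ u : ℂ, ‖u‖ = 1 → w - u ≠ 0 := fun u hu h => hw1 (by rw [sub_eq_zero.1 h, hu])
  have hp1 := hne 1 (by simp)
  have hm1 := hne (-1) (by simp)
  have hpI := hne I (by simp)
  have hmI := hne (-I) (by simp)
  simp only [List.pairwise_cons, List.mem_cons, List.not_mem_nil, or_false, forall_eq_or_imp,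
    forall_eq, List.Pairwise.nil, IsEmpty.forall_iff, implies_true, and_true]
  and_intros <;> intro h <;> grind [Complex.I_sq]

/-- For the loop γ(t) = (z₁(t),…,z₆(t)) in Conf₆(ℂ) (the six points stay pairwise
distinct), the integral over γ of α = (1/2πi)·d(z₁-z₂)/(z₁-z₂) - (1/2πi)·d(z₃-z₄)/(z₃-z₄)
equals -1. -/
theorem stmt_15 (ε : ℝ) (hε : 0 < ε) (hε1 : ε < 1)
    (z₁ z₂ z₃ z₄ z₅ z₆ : ℝ → ℂ)
    (h₁ : z₁ = fun t : ℝ => -(1 / (ε * Complex.exp (2 * π * Complex.I * (t : ℂ)))))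
    (h₂ : z₂ = fun t : ℝ => -(ε * Complex.exp (2 * π * Complex.I * (t : ℂ))))
    (h₃ : z₃ = fun _ : ℝ => 1) (h₄ : z₄ = fun _ : ℝ => -1)
    (h₅ : z₅ = fun t : ℝ => (ε * Complex.exp (2 * π * Complex.I * (t : ℂ)) * Complex.I - 1) /
        (ε * Complex.exp (2 * π * Complex.I * (t : ℂ)) - Complex.I))
    (h₆ : z₆ = fun t : ℝ => -((ε * Complex.exp (2 * π * Complex.I * (t : ℂ)) * Complex.I + 1) /
        (ε * Complex.exp (2 * π * Complex.I * (t : ℂ)) + Complex.I))) :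
    (∀ t : ℝ, [z₁ t, z₂ t, z₃ t, z₄ t, z₅ t, z₆ t].Pairwise (· ≠ ·)) ∧
    (1 / (2 * π * Complex.I)) * (∫ t in (0:ℝ)..1,
      deriv (fun s : ℝ => z₁ s - z₂ s) t / (z₁ t - z₂ t)
        - deriv (fun s : ℝ => z₃ s - z₄ s) t / (z₃ t - z₄ t)) = -1 := by
  subst h₁ h₂ h₃ h₄ h₅ h₆
  have hc : (2 * π * I).re = 0 := by simp
  have hε0 : (ε : ℂ) ≠ 0 := by exact_mod_cast hε.ne'
  have hnorm : ‖(ε : ℂ)‖ = ε := by simp [hε.le]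
  refine ⟨fun t => pairwise_ne_of_norm_ne_one ?_ ?_, ?_⟩
  · exact mul_ne_zero hε0 (Complex.exp_ne_zero _)
  · rw [norm_mul_cexp_mul_ofReal hc, hnorm]
    exact hε1.ne
  · have hloop := integral_logDeriv_circle_sub_inv hε0 hc Complex.exp_two_pi_mul_I (hnorm.trans_lt hε1)
    simp only [logDeriv_apply] at hloop
    simp only [deriv_const, zero_div, sub_zero, hloop]
    field_simp
end

section
/- Consequently, the homology class in H₁(Conf₆(ℂ);ℝ) of the loop γ from the previous statement is nonzero and is not a real multiple of the class of δ²: indeed there exists a closed 1-form (namely α) vanishing on δ² but taking value -1 on γ. -/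
/-- `V` stands for `H₁(Conf₆(ℂ);ℝ)` and `φ` for the period map of the closed form `α`. -/
theorem stmt_17 (V : Type) [AddCommGroup V] [Module ℝ V]
    (γ δsq : V) (φ : V →ₗ[ℝ] ℝ) (hγ : φ γ = -1) (hδ : φ δsq = 0) :
    γ ≠ 0 ∧ ∀ r : ℝ, γ ≠ r • δsq := by
  constructor
  · rintro rfl
    norm_num [map_zero] at hγ
  · rintro r rfl
    norm_num [map_smul, hδ] at hγ
end
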